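/- Macaulay's function is superadditive: for any nonnegative integers a and b and any positive integer d, a^{⟨d⟩} + b^{⟨d⟩} ≤ (a + b)^{⟨d⟩}. -/

import Mathlib

/-- Macaulay's function `a^{⟨d⟩}`: writing `a` in its Macaulay `d`-binomial representation
`a = C(k_d, d) + C(k_{d-1}, d-1) + ⋯ + C(k_j, j)` (computed greedily: `k_d` is the largest
integer with `C(k_d, d) ≤ a`), we set `a^{⟨d⟩} = C(k_d+1, d+1) + ⋯ + C(k_j+1, j+1)`,
and `0^{⟨d⟩} = 0`. -/
def macaulay : ℕ → ℕ → ℕ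
  | _, 0 => 0
  | 0, _ => 0
  | d + 1, a + 1 =>
    let k := Nat.findGreatest (fun k => Nat.choose k (d + 1) ≤ a + 1) (a + d + 2)
    Nat.choose (k + 1) (d + 2) + macaulay d (a + 1 - Nat.choose k (d + 1))

/-!
Write `f = macaulay (d + 1)` and `g = macaulay (d + 2)`. Splitting `b = C(k, d+2) + r` with
`r < C(k, d+1)` gives `g b = C(k+1, d+3) + f r`, so `g (a + b)` is computed from `f (r + a)` as long
as `a + b` stays below `C(k+1, d+2)`; there superadditivity of `f` and `g ≤ f` suffice. When `a + b`
crosses `C(k+1, d+2)` one needs the carry inequality `MacaulayCarry` for `g`, and proving that in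
turn needs, at level `d + 1`, the carry inequality and the monotonicity of the gaps
`f (C(m, d+1)) - f (C(m, d+1) - t)` in `m` (`MacaulayGapMono`). So the three statements are proved
together by induction on the level, starting from `macaulay 1 a = C(a+1, 2)`, where they are
quadratic inequalities.
-/

lemma macaulay_zero_left (a : ℕ) : macaulay 0 a = 0 := by cases a <;> rfl

@[simp] lemma macaulay_zero_right (d : ℕ) : macaulay d 0 = 0 := by cases d <;> rfl

lemma Nat.succ_le_choose_add {n j : ℕ} (hj : 1 ≤ j) (hjn : j ≤ n) : n + 1 ≤ n.choose j + j := by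
  induction n, hjn using Nat.le_induction with
  | base => simp
  | succ n hjn ih =>
    obtain ⟨i, rfl⟩ : ∃ i, j = i + 1 := ⟨j - 1, by omega⟩
    have := Nat.choose_pos (show i ≤ n by omega)
    rw [Nat.choose_succ_succ']
    omega

lemma macaulay_succ_choose_add {d k r : ℕ} (hr : r < k.choose d) :
    macaulay (d + 1) (k.choose (d + 1) + r) = (k + 1).choose (d + 2) + macaulay d r := by
  rcases Nat.lt_or_ge k (d + 1) with hk | hk
  · obtain rfl : k = d := by
      by_contra hne
      rw [Nat.choose_eq_zero_of_lt (show k < d by omega)] at hr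
      omega
    obtain rfl : r = 0 := by simpa using hr
    simp
  obtain ⟨a, ha⟩ : ∃ a, k.choose (d + 1) + r = a + 1 :=
    ⟨k.choose (d + 1) + r - 1, by have := Nat.choose_pos hk; omega⟩
  have hk_le := Nat.succ_le_choose_add (j := d + 1) (by omega) hk
  have hk_eq : Nat.findGreatest (fun k => k.choose (d + 1) ≤ a + 1) (a + d + 2) = k := by
    rw [Nat.findGreatest_eq_iff]
    refine ⟨by omega, fun _ => by omega, fun n hn _ hle => ?_⟩
    have := Nat.choose_le_choose (d + 1) (show k + 1 ≤ n by omega)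
    have := Nat.choose_succ_succ' k d
    omega
  rw [ha, macaulay]
  simp only [hk_eq]
  congr 2
  omega

lemma exists_eq_choose_add_lt (d a : ℕ) :
    ∃ k r : ℕ, a = k.choose (d + 1) + r ∧ r < k.choose d := by
  rcases Nat.eq_zero_or_pos a with rfl | ha
  · exact ⟨d, 0, by simp, by simp⟩
  set P : ℕ → Prop := fun k : ℕ => k.choose (d + 1) ≤ a
  have hPd : P (d + 1) := by simp only [P, Nat.choose_self]; omega
  set k := Nat.findGreatest P (a + d + 1)
  have hk : d + 1 ≤ k := Nat.le_findGreatest (by omega) hPd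
  have hPk : k.choose (d + 1) ≤ a := Nat.findGreatest_spec (m := d + 1) (by omega) hPd
  have hk_lt : k < a + d + 1 := by
    have := Nat.succ_le_choose_add (j := d + 1) (by omega) hk
    have := Nat.findGreatest_le (P := P) (a + d + 1)
    omega
  have hPk1 : ¬ P (k + 1) := Nat.findGreatest_is_greatest (n := a + d + 1) (by omega) (by omega)
  have := Nat.choose_succ_succ' k d
  simp only [P, not_le] at hPk1
  exact ⟨k, a - k.choose (d + 1), by omega, by omega⟩

lemma macaulay_succ_choose (d k : ℕ) :
    macaulay (d + 1) (k.choose (d + 1)) = (k + 1).choose (d + 2) := by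
  rcases Nat.lt_or_ge k d with hk | hk
  · simp [Nat.choose_eq_zero_of_lt (show k < d + 1 by omega),
      Nat.choose_eq_zero_of_lt (show k + 1 < d + 2 by omega)]
  · simpa using macaulay_succ_choose_add (r := 0) (Nat.choose_pos hk)

lemma two_mul_macaulay_one (a : ℕ) : 2 * macaulay 1 a = a * (a + 1) := by
  have h := macaulay_succ_choose 0 a
  rw [Nat.choose_one_right] at h
  rw [h, mul_comm, ← Nat.add_one_mul_choose_eq, Nat.choose_one_right, mul_comm]

def MacaulaySuperadditive (d : ℕ) : Prop :=
  ∀ a b, macaulay d a + macaulay d b ≤ macaulay d (a + b)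

def MacaulayCarry (d : ℕ) : Prop :=
  ∀ k x y z : ℕ, x ≤ k.choose d → y ≤ k.choose d → x + y = k.choose d + z →
    macaulay d x + macaulay d y ≤ macaulay d z + macaulay d (k.choose d)

-- `f (C(m,d)) - f (C(m,d) - t) ≤ f (C(n,d)) - f (C(n,d) - t)` for `m ≤ n`, without subtraction.
def MacaulayGapMono (d : ℕ) : Prop :=
  ∀ m n t u v : ℕ, m ≤ n → u + t = m.choose d → v + t = n.choose d →
    macaulay d (m.choose d) + macaulay d v ≤ macaulay d u + macaulay d (n.choose d)

lemma macaulaySuperadditive_one : MacaulaySuperadditive 1 := by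
  intro a b
  have := two_mul_macaulay_one a
  have := two_mul_macaulay_one b
  have := two_mul_macaulay_one (a + b)
  nlinarith

lemma macaulayCarry_one : MacaulayCarry 1 := by
  intro k x y z hx hy hsum
  simp only [Nat.choose_one_right] at hx hy hsum ⊢
  have := two_mul_macaulay_one x
  have := two_mul_macaulay_one y
  have := two_mul_macaulay_one z
  have := two_mul_macaulay_one k
  nlinarith [Nat.mul_le_mul hx hy]

lemma macaulayGapMono_one : MacaulayGapMono 1 := by
  intro m n t u v hmn hu hv
  simp only [Nat.choose_one_right] at hu hv ⊢
  have := two_mul_macaulay_one m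
  have := two_mul_macaulay_one n
  have := two_mul_macaulay_one u
  have := two_mul_macaulay_one v
  nlinarith

section Step

variable {d : ℕ}

lemma choose_le_macaulay_choose (hsa : MacaulaySuperadditive (d + 1)) (k : ℕ) :
    (k + 1).choose (d + 3) ≤ macaulay (d + 1) (k.choose (d + 2)) := by
  induction k with
  | zero => simp [Nat.choose_eq_zero_of_lt]
  | succ k ih =>
    have hpascal : (k + 1).choose (d + 2) = k.choose (d + 1) + k.choose (d + 2) :=
      Nat.choose_succ_succ' _ _
    have hsum := hsa (k.choose (d + 1)) (k.choose (d + 2))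
    rw [macaulay_succ_choose, ← hpascal] at hsum
    have : (k + 1 + 1).choose (d + 3) = (k + 1).choose (d + 2) + (k + 1).choose (d + 3) :=
      Nat.choose_succ_succ' _ _
    omega

lemma macaulay_succ_le (hsa : MacaulaySuperadditive (d + 1)) (a : ℕ) :
    macaulay (d + 2) a ≤ macaulay (d + 1) a := by
  obtain ⟨k, r, rfl, hr⟩ : ∃ k r : ℕ, a = k.choose (d + 2) + r ∧ r < k.choose (d + 1) :=
    exists_eq_choose_add_lt (d + 1) a
  have : macaulay (d + 2) (k.choose (d + 2) + r) = (k + 1).choose (d + 3) + macaulay (d + 1) r :=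
    macaulay_succ_choose_add hr
  have := choose_le_macaulay_choose hsa k
  have := hsa (k.choose (d + 2)) r
  omega

-- With `f = macaulay (d + 1)`, `g = macaulay (d + 2)`:
-- `g (C(m,d+2)) - g (C(m,d+2) - t) ≤ f (C(n,d+1)) - f (C(n,d+1) - t)` for `m ≤ n`.
lemma macaulay_succ_gap_le (hsa : MacaulaySuperadditive (d + 1)) (hgap : MacaulayGapMono (d + 1))
    {m n t u v : ℕ} (hmn : m ≤ n) (hu : u + t = m.choose (d + 2)) (hv : v + t = n.choose (d + 1)) :
    (m + 1).choose (d + 3) + macaulay (d + 1) v ≤ macaulay (d + 2) u + (n + 1).choose (d + 2) := by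
  rcases Nat.eq_zero_or_pos t with rfl | ht
  · obtain rfl : u = m.choose (d + 2) := hu
    obtain rfl : v = n.choose (d + 1) := hv
    rw [macaulay_succ_choose, macaulay_succ_choose]
  induction m generalizing t u v with
  | zero => simp only [Nat.choose_zero_succ] at hu; omega
  | succ m ih =>
    have : (m + 1).choose (d + 2) = m.choose (d + 1) + m.choose (d + 2) :=
      Nat.choose_succ_succ' _ _
    have : (m + 1 + 1).choose (d + 3) = (m + 1).choose (d + 2) + (m + 1).choose (d + 3) :=
      Nat.choose_succ_succ' _ _
    rcases le_or_gt t (m.choose (d + 1)) with hle | hgt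
    · obtain ⟨w, hw⟩ : ∃ w, w + t = m.choose (d + 1) := ⟨_, Nat.sub_add_cancel hle⟩
      have hgu : macaulay (d + 2) u = (m + 1).choose (d + 3) + macaulay (d + 1) w := by
        rw [show u = m.choose (d + 2) + w by omega]
        exact macaulay_succ_choose_add (by omega)
      have := hgap m n t w v (by omega) hw hv
      rw [macaulay_succ_choose, macaulay_succ_choose] at this
      omega
    · have := ih (t := t - m.choose (d + 1)) (u := u) (v := v + m.choose (d + 1)) (by omega)
        (by omega) (by omega) (by omega)
      have := hsa v (m.choose (d + 1))
      rw [macaulay_succ_choose] at this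
      omega

-- `g (a + t) - g a ≤ f (C(k,d+1)) - f (C(k,d+1) - t)` as long as `a + t ≤ C(k+1,d+2)`.
lemma macaulay_succ_add_le (hsa : MacaulaySuperadditive (d + 1)) (hcarry : MacaulayCarry (d + 1))
    (hgap : MacaulayGapMono (d + 1)) {k t s a : ℕ} (hs : s + t = k.choose (d + 1))
    (ha : a + t ≤ (k + 1).choose (d + 2)) :
    macaulay (d + 2) (a + t) + macaulay (d + 1) s ≤
      macaulay (d + 2) a + (k + 1).choose (d + 2) := by
  have hpascal : (k + 1).choose (d + 2) = k.choose (d + 1) + k.choose (d + 2) :=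
    Nat.choose_succ_succ' _ _
  rcases Nat.eq_zero_or_pos t with rfl | ht
  · obtain rfl : s = k.choose (d + 1) := hs
    simp [macaulay_succ_choose]
  rcases ha.lt_or_eq with hlt | heq
  · obtain ⟨k', r, hrep, hr⟩ : ∃ k' r : ℕ, a + t = k'.choose (d + 2) + r ∧ r < k'.choose (d + 1) :=
      exists_eq_choose_add_lt (d + 1) (a + t)
    have hg : macaulay (d + 2) (k'.choose (d + 2) + r) =
        (k' + 1).choose (d + 3) + macaulay (d + 1) r :=
      macaulay_succ_choose_add hr
    have hk' : k' ≤ k := by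
      by_contra!
      have := Nat.choose_le_choose (d + 2) (show k + 1 ≤ k' by omega)
      omega
    rw [hrep, hg]
    rcases le_or_gt t r with hle | hgt
    · have hga : macaulay (d + 2) (k'.choose (d + 2) + (r - t)) =
          (k' + 1).choose (d + 3) + macaulay (d + 1) (r - t) :=
        macaulay_succ_choose_add (by omega)
      have := Nat.choose_le_choose (d + 1) hk'
      have := hcarry k r s (r - t) (by omega) (by omega) (by omega)
      rw [macaulay_succ_choose] at this
      rw [show a = k'.choose (d + 2) + (r - t) by omega, hga]
      omega
    · have := macaulay_succ_gap_le hsa hgap (t := t - r) (u := a) (v := r + s) hk' (by omega)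
        (by omega)
      have := hsa r s
      omega
  · have hg : macaulay (d + 2) (k.choose (d + 2) + s) =
        (k + 1).choose (d + 3) + macaulay (d + 1) s :=
      macaulay_succ_choose_add (by omega)
    have : (k + 1 + 1).choose (d + 3) = (k + 1).choose (d + 2) + (k + 1).choose (d + 3) :=
      Nat.choose_succ_succ' _ _
    have : macaulay (d + 2) ((k + 1).choose (d + 2)) = (k + 1 + 1).choose (d + 3) :=
      macaulay_succ_choose (d + 1) (k + 1)
    rw [heq, show a = k.choose (d + 2) + s by omega, hg]
    omega

lemma macaulay_succ_add_choose_le (hsa : MacaulaySuperadditive (d + 1))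
    (hcarry : MacaulayCarry (d + 1)) (hgap : MacaulayGapMono (d + 1)) {k a : ℕ}
    (ha : a ≤ k.choose (d + 2)) :
    macaulay (d + 2) (a + k.choose (d + 1)) ≤ macaulay (d + 2) a + (k + 1).choose (d + 2) := by
  have hpascal : (k + 1).choose (d + 2) = k.choose (d + 1) + k.choose (d + 2) :=
    Nat.choose_succ_succ' _ _
  simpa using macaulay_succ_add_le hsa hcarry hgap (s := 0) (Nat.zero_add _) (by omega)

lemma macaulay_succ_carry_of_lt (hsa : MacaulaySuperadditive (d + 1))
    (hcarry : MacaulayCarry (d + 1)) (hgap : MacaulayGapMono (d + 1)) {k x y z : ℕ} (hxy : x ≤ y)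
    (hy : y < k.choose (d + 2)) (hsum : x + y = k.choose (d + 2) + z) :
    macaulay (d + 2) x + macaulay (d + 2) y ≤ macaulay (d + 2) z + (k + 1).choose (d + 3) := by
  induction k generalizing x y z with
  | zero => simp at hy
  | succ k ih =>
    obtain ⟨m, r, rfl, hr⟩ : ∃ m r : ℕ, y = m.choose (d + 2) + r ∧ r < m.choose (d + 1) :=
      exists_eq_choose_add_lt (d + 1) y
    have hgy : macaulay (d + 2) (m.choose (d + 2) + r) =
        (m + 1).choose (d + 3) + macaulay (d + 1) r :=
      macaulay_succ_choose_add hr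
    have hpascal : (k + 1).choose (d + 2) = k.choose (d + 1) + k.choose (d + 2) :=
      Nat.choose_succ_succ' _ _
    have : (k + 1 + 1).choose (d + 3) = (k + 1).choose (d + 2) + (k + 1).choose (d + 3) :=
      Nat.choose_succ_succ' _ _
    have hmk : m ≤ k := by
      by_contra!
      have := Nat.choose_le_choose (d + 2) (show k + 1 ≤ m by omega)
      omega
    rcases hmk.lt_or_eq with hlt | rfl
    · have hy' : m.choose (d + 2) + r < k.choose (d + 2) := by
        have : (m + 1).choose (d + 2) = m.choose (d + 1) + m.choose (d + 2) :=
          Nat.choose_succ_succ' _ _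
        have := Nat.choose_le_choose (d + 2) (show m + 1 ≤ k by omega)
        omega
      have := ih hxy hy' (z := z + k.choose (d + 1)) (by omega)
      have := macaulay_succ_add_choose_le hsa hcarry hgap (k := k) (a := z) (by omega)
      omega
    · have := macaulay_succ_add_le hsa hcarry hgap (k := m) (t := m.choose (d + 1) - r) (s := r)
        (a := z) (by omega) (by omega)
      rw [show z + (m.choose (d + 1) - r) = x by omega] at this
      omega

lemma macaulayCarry_succ (hsa : MacaulaySuperadditive (d + 1)) (hcarry : MacaulayCarry (d + 1))
    (hgap : MacaulayGapMono (d + 1)) : MacaulayCarry (d + 2) := by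
  suffices h : ∀ k x y z : ℕ, x ≤ y → y ≤ k.choose (d + 2) → x + y = k.choose (d + 2) + z →
      macaulay (d + 2) x + macaulay (d + 2) y ≤ macaulay (d + 2) z + (k + 1).choose (d + 3) by
    intro k x y z hx hy hsum
    rw [show macaulay (d + 2) (k.choose (d + 2)) = (k + 1).choose (d + 3) from
      macaulay_succ_choose (d + 1) k]
    rcases le_total x y with hxy | hyx
    · exact h k x y z hxy hy hsum
    · rw [add_comm (macaulay _ x)]
      exact h k y x z hyx hx (by omega)
  intro k x y z hxy hy hsum
  rcases hy.lt_or_eq with hlt | rfl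
  · exact macaulay_succ_carry_of_lt hsa hcarry hgap hxy hlt hsum
  · obtain rfl : x = z := by omega
    have : macaulay (d + 2) (k.choose (d + 2)) = (k + 1).choose (d + 3) :=
      macaulay_succ_choose (d + 1) k
    omega

lemma macaulayGapMono_succ (hsa : MacaulaySuperadditive (d + 1)) (hcarry : MacaulayCarry (d + 1))
    (hgap : MacaulayGapMono (d + 1)) : MacaulayGapMono (d + 2) := by
  intro m n t u v hmn hu hv
  have hgC (k : ℕ) : macaulay (d + 2) (k.choose (d + 2)) = (k + 1).choose (d + 3) :=
    macaulay_succ_choose (d + 1) k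
  rw [hgC, hgC]
  induction n, hmn using Nat.le_induction generalizing t u v with
  | base => rw [show v = u by omega, add_comm]
  | succ n hmn ih =>
    have hpascal : (n + 1).choose (d + 2) = n.choose (d + 1) + n.choose (d + 2) :=
      Nat.choose_succ_succ' _ _
    have : (n + 1 + 1).choose (d + 3) = (n + 1).choose (d + 2) + (n + 1).choose (d + 3) :=
      Nat.choose_succ_succ' _ _
    rcases Nat.eq_zero_or_pos t with rfl | ht
    · obtain rfl : u = m.choose (d + 2) := hu
      obtain rfl : v = (n + 1).choose (d + 2) := hv
      rw [hgC, hgC]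
    rcases le_or_gt t (n.choose (d + 1)) with hle | hgt
    · obtain ⟨w, hw⟩ : ∃ w, w + t = n.choose (d + 1) := ⟨_, Nat.sub_add_cancel hle⟩
      have hgv : macaulay (d + 2) v = (n + 1).choose (d + 3) + macaulay (d + 1) w := by
        rw [show v = n.choose (d + 2) + w by omega]
        exact macaulay_succ_choose_add (by omega)
      have := macaulay_succ_gap_le hsa hgap hmn hu hw
      omega
    · have := ih (t := t - n.choose (d + 1)) (u := u + n.choose (d + 1)) (v := v) (by omega)
        (by omega)
      have := Nat.choose_le_choose (d + 2) hmn
      have := macaulay_succ_add_choose_le hsa hcarry hgap (k := n) (a := u) (by omega)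
      omega

lemma macaulaySuperadditive_succ (hsa : MacaulaySuperadditive (d + 1))
    (hcarry : MacaulayCarry (d + 1)) (hgap : MacaulayGapMono (d + 1)) :
    MacaulaySuperadditive (d + 2) := by
  suffices h : ∀ a b, a ≤ b → macaulay (d + 2) a + macaulay (d + 2) b ≤ macaulay (d + 2) (a + b) by
    intro a b
    rcases le_total a b with hab | hba
    · exact h a b hab
    · rw [add_comm a b, add_comm (macaulay _ a)]
      exact h b a hba
  intro a
  induction a using Nat.strong_induction_on with
  | _ a ih =>
  intro b hab
  obtain ⟨k, s, rfl, hs⟩ : ∃ k s : ℕ, b = k.choose (d + 2) + s ∧ s < k.choose (d + 1) :=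
    exists_eq_choose_add_lt (d + 1) b
  have hgb : macaulay (d + 2) (k.choose (d + 2) + s) =
      (k + 1).choose (d + 3) + macaulay (d + 1) s :=
    macaulay_succ_choose_add hs
  have hpascal : (k + 1).choose (d + 2) = k.choose (d + 1) + k.choose (d + 2) :=
    Nat.choose_succ_succ' _ _
  rcases Nat.lt_or_ge (s + a) (k.choose (d + 1)) with hlt | hge
  · have hgab : macaulay (d + 2) (a + (k.choose (d + 2) + s)) =
        (k + 1).choose (d + 3) + macaulay (d + 1) (s + a) := by
      rw [show a + (k.choose (d + 2) + s) = k.choose (d + 2) + (s + a) by ring]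
      exact macaulay_succ_choose_add hlt
    have := macaulay_succ_le hsa a
    have := hsa s a
    omega
  · have := macaulayCarry_succ hsa hcarry hgap (k + 1) a (k.choose (d + 2) + s)
      (a + s - k.choose (d + 1)) (by omega) (by omega) (by omega)
    have := ih (a + s - k.choose (d + 1)) (by omega) ((k + 1).choose (d + 2)) (by omega)
    rw [show a + s - k.choose (d + 1) + (k + 1).choose (d + 2) = a + (k.choose (d + 2) + s) by
      omega] at this
    omega

end Step

theorem macaulaySuperadditive_carry_gapMono (d : ℕ) :
    MacaulaySuperadditive (d + 1) ∧ MacaulayCarry (d + 1) ∧ MacaulayGapMono (d + 1) := by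
  induction d with
  | zero => exact ⟨macaulaySuperadditive_one, macaulayCarry_one, macaulayGapMono_one⟩
  | succ d ih =>
    obtain ⟨hsa, hcarry, hgap⟩ := ih
    exact ⟨macaulaySuperadditive_succ hsa hcarry hgap, macaulayCarry_succ hsa hcarry hgap,
      macaulayGapMono_succ hsa hcarry hgap⟩

theorem macaulay_superadditive_general (a b d : ℕ) :
    macaulay d a + macaulay d b ≤ macaulay d (a + b) := by
  cases d with
  | zero => simp [macaulay_zero_left]
  | succ d => exact (macaulaySuperadditive_carry_gapMono d).1 a b

/-- Macaulay's function is superadditive: for any nonnegative integers `a` and `b` and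
any positive integer `d`, `a^{⟨d⟩} + b^{⟨d⟩} ≤ (a + b)^{⟨d⟩}`. -/
theorem macaulay_superadditive (a b d : ℕ) (hd : 0 < d) :
    macaulay d a + macaulay d b ≤ macaulay d (a + b) :=
  macaulay_superadditive_general a b d
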